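/- Let p > 3, g(t) = f₁(t)^{p+1}/t, and G(t) = ∫₀ᵗ g(s) ds. Then g satisfies the Keller–Osserman condition: ∫₁^∞ G(t)^{-1/2} dt < ∞. -/

import Mathlib

open Real Filter Set

/-- `Fk κ t = ∫₀ᵗ √(1 + 2κ s²) ds`. -/
noncomputable def Fk (κ t : ℝ) : ℝ := ∫ s in (0:ℝ)..t, Real.sqrt (1 + 2*κ*s^2)

/-- `f` is the inverse of `Fk κ` on `[0,∞)`. -/
def IsInvF (κ : ℝ) (f : ℝ → ℝ) : Prop :=
  (∀ s, 0 ≤ s → f (Fk κ s) = s) ∧ ∀ t, 0 ≤ t → 0 ≤ f t ∧ Fk κ (f t) = t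

/-- The derivative formula `f_κ'(t) = (1 + 2κ f_κ(t)²)^{-1/2}`. -/
noncomputable def fd (κ : ℝ) (f : ℝ → ℝ) (t : ℝ) : ℝ :=
  1 / Real.sqrt (1 + 2*κ*(f t)^2)

/-!
Since `Fk 1 s ≥ s` and `Fk 1 (a s) ≤ a² Fk 1 s` for `a ≥ 1`, the inverse satisfies `f₁ t ≤ t` and
`f₁ t ≥ f₁ 1 · √t` on `[1, ∞)`. The first bound makes `g` bounded near `0`; the second gives
`g t ≥ f₁(1)^(p+1) t^((p-1)/2)`, so `G t ≥ c t^((p+1)/2)` on `[1, ∞)` with `(p+1)/2 > 2`, and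
`G^(-1/2)` is dominated by an integrable power.
-/

open MeasureTheory

section Fk

variable {κ : ℝ}

lemma one_le_sqrt_one_add_two_mul_sq (hκ : 0 ≤ κ) (s : ℝ) : 1 ≤ √(1 + 2 * κ * s ^ 2) :=
  one_le_sqrt.mpr (by nlinarith [sq_nonneg s])

lemma continuous_sqrt_one_add_two_mul_sq (κ : ℝ) : Continuous fun s : ℝ => √(1 + 2 * κ * s ^ 2) := by
  fun_prop

lemma Fk_sub_Fk (κ a b : ℝ) : Fk κ b - Fk κ a = ∫ s in a..b, √(1 + 2 * κ * s ^ 2) := by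
  rw [Fk, Fk, intervalIntegral.integral_interval_sub_left]
  all_goals exact (continuous_sqrt_one_add_two_mul_sq κ).intervalIntegrable _ _

lemma sub_le_Fk_sub_Fk (hκ : 0 ≤ κ) {a b : ℝ} (hab : a ≤ b) : b - a ≤ Fk κ b - Fk κ a := by
  rw [Fk_sub_Fk]
  simpa using intervalIntegral.integral_mono_on hab (intervalIntegrable_const (μ := volume))
    ((continuous_sqrt_one_add_two_mul_sq κ).intervalIntegrable a b)
    fun s _ => one_le_sqrt_one_add_two_mul_sq hκ s

lemma Fk_strictMono (hκ : 0 ≤ κ) : StrictMono (Fk κ) := fun a b hab => by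
  linarith [sub_le_Fk_sub_Fk hκ hab.le]

@[simp]
lemma Fk_zero (κ : ℝ) : Fk κ 0 = 0 := by simp [Fk]

lemma le_Fk (hκ : 0 ≤ κ) {s : ℝ} (hs : 0 ≤ s) : s ≤ Fk κ s := by
  simpa using sub_le_Fk_sub_Fk hκ hs

-- The substitution `u = a x` turns `Fk κ (a s)` into `a ∫₀ˢ √(1 + 2κa²x²) dx`, and that integrand is
-- at most `a √(1 + 2κx²)` when `a ≥ 1`.
lemma Fk_mul_le {a s : ℝ} (ha : 1 ≤ a) (hs : 0 ≤ s) :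
    Fk κ (a * s) ≤ a ^ 2 * Fk κ s := by
  have ha0 : 0 < a := by linarith
  have hsubst : Fk κ (a * s) = a * ∫ x in (0:ℝ)..s, √(1 + 2 * κ * (a * x) ^ 2) := by
    rw [intervalIntegral.integral_comp_mul_left (fun u => √(1 + 2 * κ * u ^ 2)) ha0.ne',
      mul_zero, smul_eq_mul, ← mul_assoc, mul_inv_cancel₀ ha0.ne', one_mul, Fk]
  have hpointwise : ∀ x, √(1 + 2 * κ * (a * x) ^ 2) ≤ a * √(1 + 2 * κ * x ^ 2) := fun x => by
    calc √(1 + 2 * κ * (a * x) ^ 2) ≤ √(a ^ 2 * (1 + 2 * κ * x ^ 2)) := sqrt_le_sqrt (by nlinarith)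
      _ = a * √(1 + 2 * κ * x ^ 2) := by rw [sqrt_mul (sq_nonneg a), sqrt_sq ha0.le]
  calc Fk κ (a * s) = a * ∫ x in (0:ℝ)..s, √(1 + 2 * κ * (a * x) ^ 2) := hsubst
    _ ≤ a * ∫ x in (0:ℝ)..s, a * √(1 + 2 * κ * x ^ 2) := by
      gcongr
      refine intervalIntegral.integral_mono_on hs ?_ ?_ fun x _ => hpointwise x
      all_goals exact Continuous.intervalIntegrable (by fun_prop) _ _
    _ = a ^ 2 * Fk κ s := by rw [intervalIntegral.integral_const_mul, Fk]; ring

end Fk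

namespace IsInvF

variable {κ : ℝ} {f : ℝ → ℝ}

lemma nonneg (hf : IsInvF κ f) {t : ℝ} (ht : 0 ≤ t) : 0 ≤ f t := (hf.2 t ht).1

lemma Fk_apply (hf : IsInvF κ f) {t : ℝ} (ht : 0 ≤ t) : Fk κ (f t) = t := (hf.2 t ht).2

lemma le_apply_iff (hκ : 0 ≤ κ) (hf : IsInvF κ f) {s t : ℝ} (ht : 0 ≤ t) :
    s ≤ f t ↔ Fk κ s ≤ t := by
  rw [← (Fk_strictMono hκ).le_iff_le, hf.Fk_apply ht]

lemma monotoneOn (hκ : 0 ≤ κ) (hf : IsInvF κ f) : MonotoneOn f (Ici 0) := fun s hs t _ hst => by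
  rwa [hf.le_apply_iff hκ (le_trans hs hst), hf.Fk_apply hs]

lemma apply_le_self (hκ : 0 ≤ κ) (hf : IsInvF κ f) {t : ℝ} (ht : 0 ≤ t) : f t ≤ t := by
  simpa only [hf.Fk_apply ht] using le_Fk hκ (hf.nonneg ht)

lemma pos (hf : IsInvF κ f) {t : ℝ} (ht : 0 < t) : 0 < f t := by
  refine (hf.nonneg ht.le).lt_of_ne fun h => ht.ne ?_
  rw [← hf.Fk_apply ht.le, ← h, Fk_zero]

lemma mul_le_apply_sq_mul (hκ : 0 ≤ κ) (hf : IsInvF κ f) {a t : ℝ} (ha : 1 ≤ a) (ht : 0 ≤ t) :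
    a * f t ≤ f (a ^ 2 * t) := by
  rw [hf.le_apply_iff hκ (by positivity)]
  simpa only [hf.Fk_apply ht] using Fk_mul_le (κ := κ) ha (hf.nonneg ht)

lemma mul_sqrt_le (hκ : 0 ≤ κ) (hf : IsInvF κ f) {t : ℝ} (ht : 1 ≤ t) : f 1 * √t ≤ f t := by
  simpa [mul_comm, sq_sqrt (zero_le_one.trans ht)] using
    hf.mul_le_apply_sq_mul hκ (one_le_sqrt.mpr ht) zero_le_one

end IsInvF

section RpowDiv

variable {κ r : ℝ} {f g : ℝ → ℝ}

lemma IsInvF.intervalIntegrable_rpow_div (hκ : 0 ≤ κ) (hf : IsInvF κ f) (hr : 1 ≤ r)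
    (hg : ∀ t, 0 < t → g t = f t ^ r / t) {T : ℝ} (hT : 0 ≤ T) :
    IntervalIntegrable g volume 0 T := by
  rw [intervalIntegrable_iff_integrableOn_Ioc_of_le hT]
  have hf_meas : AEMeasurable f (volume.restrict (Ioc 0 T)) :=
    aemeasurable_restrict_of_monotoneOn measurableSet_Ioc
      ((hf.monotoneOn hκ).mono (Ioc_subset_Ioi_self.trans Ioi_subset_Ici_self))
  refine IntegrableOn.congr_fun (f := fun t => f t ^ r / t) ?_ (fun t ht => (hg t ht.1).symm)
    measurableSet_Ioc
  refine Integrable.of_bound ((hf_meas.pow_const r).div aemeasurable_id).aestronglyMeasurable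
    (T ^ (r - 1)) ?_
  rw [ae_restrict_iff' measurableSet_Ioc]
  refine ae_of_all _ fun t ⟨ht0, htT⟩ => ?_
  have hft := hf.nonneg ht0.le
  rw [norm_of_nonneg (by positivity)]
  calc f t ^ r / t ≤ t ^ r / t := by gcongr; exact hf.apply_le_self hκ ht0.le
    _ = t ^ (r - 1) := by rw [rpow_sub_one ht0.ne']
    _ ≤ T ^ (r - 1) := rpow_le_rpow ht0.le htT (by linarith)

lemma IsInvF.rpow_mul_rpow_le_rpow_div (hκ : 0 ≤ κ) (hf : IsInvF κ f) (hr : 0 ≤ r) {t : ℝ}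
    (ht : 1 ≤ t) : f 1 ^ r * t ^ (r / 2 - 1) ≤ f t ^ r / t := by
  have ht0 : 0 < t := by linarith
  calc f 1 ^ r * t ^ (r / 2 - 1) = (f 1 * √t) ^ r / t := by
        rw [mul_rpow (hf.nonneg zero_le_one) (sqrt_nonneg t), sqrt_eq_rpow, ← rpow_mul ht0.le,
          rpow_sub_one ht0.ne', mul_div_assoc, one_div_mul_eq_div]
    _ ≤ f t ^ r / t := by
        have := hf.nonneg zero_le_one
        gcongr
        exact hf.mul_sqrt_le hκ ht

end RpowDiv

section Primitive

variable {g : ℝ → ℝ}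

lemma monotoneOn_primitive (hint : ∀ T, 0 ≤ T → IntervalIntegrable g volume 0 T) {a : ℝ}
    (ha : 0 ≤ a) (hg : ∀ t, a ≤ t → 0 ≤ g t) :
    MonotoneOn (fun t => ∫ s in (0:ℝ)..t, g s) (Ici a) := fun s hs t ht hst => by
  rw [← sub_nonneg, intervalIntegral.integral_interval_sub_left (hint t (ha.trans ht))
    (hint s (ha.trans hs))]
  exact intervalIntegral.integral_nonneg hst fun u hu => hg u (le_trans hs hu.1)

-- `G = ∫₀ᵗ g` is positive at `1` and grows like `t^(α+1)` afterwards, so it dominates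
-- `min (G 1) (C / (α + 1)) · t^(α+1)` on `[1, ∞)`.
lemma exists_mul_rpow_le_primitive {C α : ℝ} (hC : 0 < C) (hα : -1 < α)
    (hint : ∀ T, 0 ≤ T → IntervalIntegrable g volume 0 T) (hpos : ∀ t, 0 < t → 0 < g t)
    (hlow : ∀ t, 1 ≤ t → C * t ^ α ≤ g t) :
    ∃ c > 0, ∀ t, 1 ≤ t → c * t ^ (α + 1) ≤ ∫ s in (0:ℝ)..t, g s := by
  have hα1 : 0 < α + 1 := by linarith
  have hG1 : 0 < ∫ s in (0:ℝ)..1, g s :=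
    intervalIntegral.intervalIntegral_pos_of_pos_on (hint 1 zero_le_one) (fun x hx => hpos x hx.1)
      one_pos
  refine ⟨min (∫ s in (0:ℝ)..1, g s) (C / (α + 1)), lt_min hG1 (div_pos hC hα1), fun t ht => ?_⟩
  have h1t : IntervalIntegrable g volume 1 t :=
    (hint 1 zero_le_one).symm.trans (hint t (zero_le_one.trans ht))
  have htail : C / (α + 1) * (t ^ (α + 1) - 1) ≤ ∫ s in (1:ℝ)..t, g s :=
    calc C / (α + 1) * (t ^ (α + 1) - 1) = ∫ s in (1:ℝ)..t, C * s ^ α := by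
          rw [intervalIntegral.integral_const_mul, integral_rpow (Or.inl hα), one_rpow]; ring
      _ ≤ ∫ s in (1:ℝ)..t, g s :=
          intervalIntegral.integral_mono_on ht
            ((intervalIntegral.intervalIntegrable_rpow' hα).const_mul C) h1t
            fun s hs => hlow s hs.1
  have hpow : 1 ≤ t ^ (α + 1) := one_le_rpow ht hα1.le
  rw [← intervalIntegral.integral_add_adjacent_intervals (hint 1 zero_le_one) h1t]
  have := mul_le_mul_of_nonneg_right (min_le_right (∫ s in (0:ℝ)..1, g s) (C / (α + 1)))
    (sub_nonneg.mpr hpow)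
  nlinarith [min_le_left (∫ s in (0:ℝ)..1, g s) (C / (α + 1))]

end Primitive

lemma integrableOn_Ioi_one_div_sqrt {G : ℝ → ℝ} {c β : ℝ} (hc : 0 < c) (hβ : 2 < β)
    (hmono : MonotoneOn G (Ici 1)) (hG : ∀ t, 1 ≤ t → c * t ^ β ≤ G t) :
    IntegrableOn (fun t => 1 / √(G t)) (Ioi 1) := by
  have hmeas : AEStronglyMeasurable (fun t => 1 / √(G t)) (volume.restrict (Ioi 1)) :=
    ((aemeasurable_restrict_of_monotoneOn measurableSet_Ioi
      (hmono.mono Ioi_subset_Ici_self)).sqrt.const_div 1).aestronglyMeasurable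
  refine Integrable.mono'
    ((integrableOn_Ioi_rpow_of_lt (by linarith : -(β / 2) < -1) one_pos).const_mul (1 / √c))
    hmeas ?_
  rw [ae_restrict_iff' measurableSet_Ioi]
  refine ae_of_all _ fun t (ht : 1 < t) => ?_
  have ht0 : 0 < t := by linarith
  rw [norm_of_nonneg (by positivity)]
  calc 1 / √(G t) ≤ 1 / √(c * t ^ β) :=
        one_div_le_one_div_of_le (by positivity) (sqrt_le_sqrt (hG t ht.le))
    _ = 1 / √c * t ^ (-(β / 2)) := by
        rw [sqrt_mul hc.le, sqrt_eq_rpow (t ^ β), ← rpow_mul ht0.le, rpow_neg ht0.le]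
        field_simp

theorem stmt_18 (p : ℝ) (hp : 3 < p) (f₁ : ℝ → ℝ) (hf₁ : IsInvF 1 f₁)
    (g G : ℝ → ℝ)
    (hg : ∀ t, 0 < t → g t = (f₁ t) ^ (p + 1) / t)
    (hG : ∀ t, G t = ∫ s in (0:ℝ)..t, g s) :
    MeasureTheory.IntegrableOn (fun t => 1 / Real.sqrt (G t)) (Set.Ioi 1) := by
  obtain rfl : G = fun t => ∫ s in (0:ℝ)..t, g s := funext hG
  have hint : ∀ T, 0 ≤ T → IntervalIntegrable g volume 0 T := fun T hT =>
    hf₁.intervalIntegrable_rpow_div zero_le_one (by linarith) hg hT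
  have hpos : ∀ t, 0 < t → 0 < g t := fun t ht => by
    rw [hg t ht]
    exact div_pos (rpow_pos_of_pos (hf₁.pos ht) _) ht
  have hlow : ∀ t, 1 ≤ t → f₁ 1 ^ (p + 1) * t ^ ((p + 1) / 2 - 1) ≤ g t := fun t ht => by
    rw [hg t (by linarith)]
    exact hf₁.rpow_mul_rpow_le_rpow_div zero_le_one (by linarith) ht
  obtain ⟨c, hc, hGc⟩ :=
    exists_mul_rpow_le_primitive (rpow_pos_of_pos (hf₁.pos one_pos) _) (by linarith) hint hpos hlow
  exact integrableOn_Ioi_one_div_sqrt hc (by linarith)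
    (monotoneOn_primitive hint zero_le_one fun t ht => (hpos t (by linarith)).le) hGc
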